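/- (Theorem 1, remaining-data case.) Let a, b ∈ ℝ^d, let W_pre, W_exact be d×C real matrices, and let Û, U* ∈ ℝ^{d×s} have orthonormal columns. Suppose: ‖a − b‖₂ ≤ ε_d; ‖b‖₂ ≤ ε_exact; ‖(I − U*U*ᵀ) b‖₂ ≤ ε_rm; ‖U*U*ᵀ − ÛÛᵀ‖_F ≤ ε_opt; ‖W_pre‖₂ ≤ L_pre; and ‖W_pre − W_exact‖₂ ≤ ε_W. Then ‖W_preᵀ ÛÛᵀ a − W_exactᵀ b‖₂ ≤ L_pre (ε_d + ε_rm + ε_opt ε_exact) + ε_W ε_exact. -/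

import Mathlib

open Matrix

/-- The Euclidean (ℓ²) norm of a vector in `ℝ^n`. -/
noncomputable def eNorm {n : ℕ} (v : Fin n → ℝ) : ℝ := Real.sqrt (∑ i, v i ^ 2)

/-- The Frobenius norm of a real matrix. -/
noncomputable def fNorm {m n : ℕ} (A : Matrix (Fin m) (Fin n) ℝ) : ℝ :=
  Real.sqrt (∑ i, ∑ j, A i j ^ 2)

/-- The spectral (ℓ² operator) norm of a real matrix. -/
noncomputable def sNorm {m n : ℕ} (A : Matrix (Fin m) (Fin n) ℝ) : ℝ :=
  sSup {c : ℝ | ∃ v : Fin n → ℝ, eNorm v ≤ 1 ∧ c = eNorm (A.mulVec v)}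

lemma eNorm_eq {n : ℕ} (v : Fin n → ℝ) :
    eNorm v = ‖(WithLp.equiv 2 (Fin n → ℝ)).symm v‖ := by
  rw [EuclideanSpace.norm_eq]
  simp [eNorm, Real.norm_eq_abs, sq_abs]

lemma eNorm_nonneg {n : ℕ} (v : Fin n → ℝ) : 0 ≤ eNorm v := Real.sqrt_nonneg _

lemma eNorm_smul {n : ℕ} (r : ℝ) (x : Fin n → ℝ) : eNorm (r • x) = |r| * eNorm x := by
  simp only [eNorm_eq]
  rw [show (WithLp.equiv 2 (Fin n → ℝ)).symm (r • x) = r • (WithLp.equiv 2 (Fin n → ℝ)).symm x from rfl,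
    norm_smul, Real.norm_eq_abs]

lemma eNorm_eq_zero {n : ℕ} {x : Fin n → ℝ} (h : eNorm x = 0) : x = 0 := by
  rw [eNorm_eq] at h
  have := norm_eq_zero.mp h
  simpa using congrArg (WithLp.equiv 2 (Fin n → ℝ)) this

lemma eNorm_add_le {n : ℕ} (x y : Fin n → ℝ) : eNorm (x + y) ≤ eNorm x + eNorm y := by
  simp only [eNorm_eq]
  exact norm_add_le _ _

lemma eNorm_neg {n : ℕ} (x : Fin n → ℝ) : eNorm (-x) = eNorm x := by
  simp only [eNorm_eq]; exact norm_neg _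

lemma dot_le {n : ℕ} (v w : Fin n → ℝ) : v ⬝ᵥ w ≤ eNorm v * eNorm w := by
  simp only [eNorm_eq]
  refine le_trans (le_of_eq ?_) (real_inner_le_norm ((WithLp.equiv 2 (Fin n → ℝ)).symm v) ((WithLp.equiv 2 (Fin n → ℝ)).symm w))
  simp [PiLp.inner_apply, dotProduct, RCLike.inner_apply, mul_comm]

lemma dot_self_eq {n : ℕ} (v : Fin n → ℝ) : v ⬝ᵥ v = eNorm v ^ 2 := by
  simp only [eNorm_eq]
  rw [← real_inner_self_eq_norm_sq]
  simp only [PiLp.inner_apply, dotProduct, RCLike.inner_apply, mul_comm]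
  simp [mul_comm]

lemma fNorm_nonneg {m n : ℕ} (A : Matrix (Fin m) (Fin n) ℝ) : 0 ≤ fNorm A := Real.sqrt_nonneg _

lemma eNorm_mulVec_le_fNorm {m n : ℕ} (A : Matrix (Fin m) (Fin n) ℝ) (v : Fin n → ℝ) :
    eNorm (A *ᵥ v) ≤ fNorm A * eNorm v := by
  have hsq : eNorm (A *ᵥ v) ^ 2 ≤ (fNorm A * eNorm v) ^ 2 := by
    rw [← dot_self_eq]
    have hA2 : fNorm A ^ 2 = ∑ i, ∑ j, A i j ^ 2 := by
      rw [fNorm, sq, Real.mul_self_sqrt]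
      positivity
    have : (A *ᵥ v) ⬝ᵥ (A *ᵥ v) = ∑ i, (A i ⬝ᵥ v) ^ 2 := by
      simp [dotProduct, mulVec, sq]
    rw [this, mul_pow, hA2, Finset.sum_mul]
    refine Finset.sum_le_sum fun i _ => ?_
    have hrow : (A i ⬝ᵥ v) ^ 2 ≤ (eNorm (A i) * eNorm v) ^ 2 := by
      have h1 : A i ⬝ᵥ v ≤ eNorm (A i) * eNorm v := dot_le _ _
      have h2 : -(eNorm (A i) * eNorm v) ≤ A i ⬝ᵥ v := by
        have := dot_le (-(A i)) v
        have hneg : (-(A i)) ⬝ᵥ v = -(A i ⬝ᵥ v) := by simp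
        have henorm : eNorm (-(A i)) = eNorm (A i) := by
          simp only [eNorm_eq]
          rw [show (WithLp.equiv 2 (Fin n → ℝ)).symm (-(A i)) = -((WithLp.equiv 2 (Fin n → ℝ)).symm (A i)) from rfl, norm_neg]
        rw [hneg, henorm] at this
        linarith
      exact sq_le_sq' h2 h1
    refine hrow.trans (le_of_eq ?_)
    rw [mul_pow]
    congr 1
    rw [eNorm, sq, Real.mul_self_sqrt] <;> positivity
  have h0 : 0 ≤ fNorm A * eNorm v := mul_nonneg (fNorm_nonneg A) (eNorm_nonneg v)
  nlinarith [eNorm_nonneg (A *ᵥ v)]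

lemma sNorm_bddAbove {m n : ℕ} (A : Matrix (Fin m) (Fin n) ℝ) :
    BddAbove {c : ℝ | ∃ v : Fin n → ℝ, eNorm v ≤ 1 ∧ c = eNorm (A.mulVec v)} := by
  refine ⟨fNorm A, ?_⟩
  rintro c ⟨v, hv, rfl⟩
  calc eNorm (A *ᵥ v) ≤ fNorm A * eNorm v := eNorm_mulVec_le_fNorm A v
    _ ≤ fNorm A * 1 := by
        exact mul_le_mul_of_nonneg_left hv (fNorm_nonneg A)
    _ = fNorm A := mul_one _

lemma sNorm_nonneg {m n : ℕ} (A : Matrix (Fin m) (Fin n) ℝ) : 0 ≤ sNorm A := by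
  refine le_csSup (sNorm_bddAbove A) ⟨0, ?_, ?_⟩ <;> simp [eNorm]

lemma eNorm_mulVec_le_sNorm {m n : ℕ} (A : Matrix (Fin m) (Fin n) ℝ) (v : Fin n → ℝ) :
    eNorm (A *ᵥ v) ≤ sNorm A * eNorm v := by
  rcases eq_or_ne (eNorm v) 0 with h0 | h0
  · rw [eNorm_eq_zero h0]
    simp [eNorm, h0, Matrix.mulVec_zero]
  · have hpos : 0 < eNorm v := lt_of_le_of_ne (eNorm_nonneg v) (Ne.symm h0)
    have hu : eNorm ((eNorm v)⁻¹ • v) = 1 := by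
      rw [eNorm_smul, abs_of_pos (by positivity), inv_mul_cancel₀ h0]
    have hmem : eNorm (A *ᵥ ((eNorm v)⁻¹ • v)) ≤ sNorm A :=
      le_csSup (sNorm_bddAbove A) ⟨_, hu.le, rfl⟩
    rw [Matrix.mulVec_smul, eNorm_smul, abs_of_pos (by positivity)] at hmem
    calc eNorm (A *ᵥ v) = (eNorm v) * ((eNorm v)⁻¹ * eNorm (A *ᵥ v)) := by
          field_simp
      _ ≤ eNorm v * sNorm A := mul_le_mul_of_nonneg_left hmem hpos.le
      _ = sNorm A * eNorm v := mul_comm _ _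

lemma eNorm_transpose_mulVec_le {m n : ℕ} (A : Matrix (Fin m) (Fin n) ℝ) (v : Fin m → ℝ) :
    eNorm (Aᵀ *ᵥ v) ≤ sNorm A * eNorm v := by
  set w := Aᵀ *ᵥ v with hw
  have key : eNorm w ^ 2 ≤ (sNorm A * eNorm v) * eNorm w := by
    have h1 : eNorm w ^ 2 = v ⬝ᵥ (A *ᵥ w) := by
      rw [← dot_self_eq, hw, Matrix.mulVec_transpose, ← Matrix.dotProduct_mulVec]
    rw [h1]
    calc v ⬝ᵥ (A *ᵥ w) ≤ eNorm v * eNorm (A *ᵥ w) := dot_le _ _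
      _ ≤ eNorm v * (sNorm A * eNorm w) :=
          mul_le_mul_of_nonneg_left (eNorm_mulVec_le_sNorm A w) (eNorm_nonneg v)
      _ = (sNorm A * eNorm v) * eNorm w := by ring
  rcases eq_or_ne (eNorm w) 0 with h0 | h0
  · rw [h0]; exact mul_nonneg (sNorm_nonneg A) (eNorm_nonneg v)
  · have hpos : 0 < eNorm w := lt_of_le_of_ne (eNorm_nonneg w) (Ne.symm h0)
    rw [sq] at key
    exact le_of_mul_le_mul_right (by linarith) hpos

lemma eNorm_ortho_mulVec {m n : ℕ} {U : Matrix (Fin m) (Fin n) ℝ} (h : Uᵀ * U = 1)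
    (y : Fin n → ℝ) : eNorm (U *ᵥ y) = eNorm y := by
  have hsq : (U *ᵥ y) ⬝ᵥ (U *ᵥ y) = y ⬝ᵥ y := by
    rw [Matrix.dotProduct_mulVec, ← Matrix.mulVec_transpose, Matrix.mulVec_mulVec, h,
      Matrix.one_mulVec]
  rw [dot_self_eq, dot_self_eq] at hsq
  have := eNorm_nonneg (U *ᵥ y); have := eNorm_nonneg y
  nlinarith

lemma eNorm_orthoT_mulVec_le {m n : ℕ} {U : Matrix (Fin m) (Fin n) ℝ} (h : Uᵀ * U = 1)
    (x : Fin m → ℝ) : eNorm (Uᵀ *ᵥ x) ≤ eNorm x := by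
  set w := Uᵀ *ᵥ x with hw
  have key : eNorm w ^ 2 ≤ eNorm x * eNorm w := by
    have h1 : eNorm w ^ 2 = x ⬝ᵥ (U *ᵥ w) := by
      rw [← dot_self_eq, hw, Matrix.mulVec_transpose, ← Matrix.dotProduct_mulVec]
    rw [h1, ← eNorm_ortho_mulVec h w] at *
    exact dot_le _ _
  rcases eq_or_ne (eNorm w) 0 with h0 | h0
  · rw [h0]; exact eNorm_nonneg x
  · have hpos : 0 < eNorm w := lt_of_le_of_ne (eNorm_nonneg w) (Ne.symm h0)
    rw [sq] at key
    exact le_of_mul_le_mul_right key hpos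

lemma eNorm_proj_mulVec_le {m n : ℕ} {U : Matrix (Fin m) (Fin n) ℝ} (h : Uᵀ * U = 1)
    (x : Fin m → ℝ) : eNorm ((U * Uᵀ) *ᵥ x) ≤ eNorm x := by
  rw [← Matrix.mulVec_mulVec, eNorm_ortho_mulVec h]
  exact eNorm_orthoT_mulVec_le h x

/-- Theorem 1, remaining-data case: with `a = g_pre(x)`, `b = g_exact(x)`, if
`‖a − b‖₂ ≤ ε_d`, `‖b‖₂ ≤ ε_exact`, `‖(I − U*U*ᵀ) b‖₂ ≤ ε_rm`,
`‖U*U*ᵀ − ÛÛᵀ‖_F ≤ ε_opt`, `‖W_pre‖₂ ≤ L_pre` and `‖W_pre − W_exact‖₂ ≤ ε_W`, then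
`‖W_preᵀ ÛÛᵀ a − W_exactᵀ b‖₂ ≤ L_pre (ε_d + ε_rm + ε_opt ε_exact) + ε_W ε_exact`. -/
theorem unlearned_output_gap_remaining_case
    {d s C : ℕ}
    (a b : Fin d → ℝ)
    (Wpre Wexact : Matrix (Fin d) (Fin C) ℝ)
    (Uhat Ustar : Matrix (Fin d) (Fin s) ℝ)
    (hUhat : Uhatᵀ * Uhat = 1) (hUstar : Ustarᵀ * Ustar = 1)
    (εd εexact εrm εopt εW Lpre : ℝ)
    (hεd : 0 ≤ εd) (hεexact : 0 ≤ εexact) (hεrm : 0 ≤ εrm)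
    (hεopt : 0 ≤ εopt) (hεW : 0 ≤ εW) (hLpre : 0 ≤ Lpre)
    (h1 : eNorm (a - b) ≤ εd)
    (h2 : eNorm b ≤ εexact)
    (h3 : eNorm ((1 - Ustar * Ustarᵀ).mulVec b) ≤ εrm)
    (h4 : fNorm (Ustar * Ustarᵀ - Uhat * Uhatᵀ) ≤ εopt)
    (h5 : sNorm Wpre ≤ Lpre)
    (h6 : sNorm (Wpre - Wexact) ≤ εW) :
    eNorm (Wpreᵀ.mulVec ((Uhat * Uhatᵀ).mulVec a) - Wexactᵀ.mulVec b)
      ≤ Lpre * (εd + εrm + εopt * εexact) + εW * εexact := by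
  set P := Uhat * Uhatᵀ with hP
  set Q := Ustar * Ustarᵀ with hQ
  set t1 := Wpreᵀ *ᵥ (P *ᵥ (a - b)) with ht1
  set t2 := Wpreᵀ *ᵥ ((Q - P) *ᵥ b) with ht2
  set t3 := Wpreᵀ *ᵥ ((1 - Q) *ᵥ b) with ht3
  set t4 := (Wpre - Wexact)ᵀ *ᵥ b with ht4
  have decomp : Wpreᵀ *ᵥ (P *ᵥ a) - Wexactᵀ *ᵥ b = t1 + -t2 + -t3 + t4 := by
    rw [ht1, ht2, ht3, ht4]
    simp only [Matrix.mulVec_sub, Matrix.sub_mulVec, Matrix.transpose_sub,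
      Matrix.one_mulVec, Matrix.mulVec_add]
    abel
  have htri : eNorm (Wpreᵀ *ᵥ (P *ᵥ a) - Wexactᵀ *ᵥ b)
      ≤ eNorm t1 + eNorm t2 + eNorm t3 + eNorm t4 := by
    rw [decomp]
    calc eNorm (t1 + -t2 + -t3 + t4) ≤ eNorm (t1 + -t2 + -t3) + eNorm t4 := eNorm_add_le _ _
      _ ≤ eNorm (t1 + -t2) + eNorm (-t3) + eNorm t4 := by
          have := eNorm_add_le (t1 + -t2) (-t3); linarith
      _ ≤ eNorm t1 + eNorm (-t2) + eNorm (-t3) + eNorm t4 := by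
          have := eNorm_add_le t1 (-t2); linarith
      _ = eNorm t1 + eNorm t2 + eNorm t3 + eNorm t4 := by rw [eNorm_neg, eNorm_neg]
  have b1 : eNorm t1 ≤ Lpre * εd := by
    refine (eNorm_transpose_mulVec_le Wpre _).trans ?_
    exact mul_le_mul h5 ((eNorm_proj_mulVec_le hUhat _).trans h1) (eNorm_nonneg _) hLpre
  have b2 : eNorm t2 ≤ Lpre * (εopt * εexact) := by
    refine (eNorm_transpose_mulVec_le Wpre _).trans ?_
    refine mul_le_mul h5 ?_ (eNorm_nonneg _) hLpre
    refine (eNorm_mulVec_le_fNorm _ _).trans ?_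
    exact mul_le_mul h4 h2 (eNorm_nonneg _) hεopt
  have b3 : eNorm t3 ≤ Lpre * εrm := by
    refine (eNorm_transpose_mulVec_le Wpre _).trans ?_
    exact mul_le_mul h5 h3 (eNorm_nonneg _) hLpre
  have b4 : eNorm t4 ≤ εW * εexact := by
    refine (eNorm_transpose_mulVec_le (Wpre - Wexact) _).trans ?_
    exact mul_le_mul h6 h2 (eNorm_nonneg _) hεW
  calc eNorm (Wpreᵀ *ᵥ (P *ᵥ a) - Wexactᵀ *ᵥ b)
      ≤ eNorm t1 + eNorm t2 + eNorm t3 + eNorm t4 := htri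
    _ ≤ Lpre * εd + Lpre * (εopt * εexact) + Lpre * εrm + εW * εexact := by linarith
    _ = Lpre * (εd + εrm + εopt * εexact) + εW * εexact := by ring
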